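/- If f ∈ K (i.e. f = K_μ for some complex Borel measure μ on T) and F is a primitive of f on the unit disk, then F ∘ φ_a has derivative in K; consequently if f ∈ J then f ∘ φ_a differs from an element of J by a constant, for any -1 < a < 1. -/

import Mathlib

/-! With `φ_a z = (z + a) / (1 + z a)` (`mobius a`), the map `φ_{-a}` sends the unit circle onto
itself and inverts `φ_a` there. The Cauchy-type kernel is Möbius invariant,
`Kker (φ_a η) (φ_a z) · φ_a'(z) = Kker η z`, and `Jker η` is the primitive of `Kker η` vanishing
at `0`, so `Jker (φ_a η) (φ_a z) = Jker η z + Jker (φ_a η) a`. Substituting `ξ = φ_a η` in the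
integrals representing `f` and `g`, both `(F ∘ φ_a)'` and `g ∘ φ_a` are represented again by the
same kernels against the pushforward of `w dP` under `φ_{-a}`, up to the constant
`∫ Jker ξ a · w ξ dP` in the second case. -/

open MeasureTheory Metric Complex

/-- The Cauchy-type kernel `1/(ξ - z) - ξ/(1 - ξ z)`. -/
noncomputable def Kker (ξ z : ℂ) : ℂ := 1 / (ξ - z) - ξ / (1 - ξ * z)

/-- The logarithmic kernel `log((1 - ξ z)/(1 - conj ξ z))` (principal branch, which is
the branch vanishing at `z = 0`). -/
noncomputable def Jker (ξ z : ℂ) : ℂ :=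
  Complex.log ((1 - ξ * z) / (1 - (starRingEnd ℂ) ξ * z))

/-- `f ∈ K` (measure encoded as `w dP`). -/
def MemK (f : ℂ → ℂ) : Prop :=
  ∃ (P : Measure ℂ) (w : ℂ → ℂ), IsFiniteMeasure P ∧ (∀ᵐ ξ ∂P, ‖ξ‖ = 1) ∧
    Integrable w P ∧ ∀ z ∈ ball (0 : ℂ) 1, f z = ∫ ξ, Kker ξ z * w ξ ∂P

/-- `f ∈ J` (measure encoded as `w dP`). -/
def MemJ (f : ℂ → ℂ) : Prop :=
  ∃ (P : Measure ℂ) (w : ℂ → ℂ), IsFiniteMeasure P ∧ (∀ᵐ ξ ∂P, ‖ξ‖ = 1) ∧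
    Integrable w P ∧ ∀ z ∈ ball (0 : ℂ) 1, f z = ∫ ξ, Jker ξ z * w ξ ∂P

namespace Complex

lemma re_one_sub_pos {w : ℂ} (hw : ‖w‖ < 1) : 0 < (1 - w).re := by
  simpa using (re_le_norm w).trans_lt hw

lemma one_sub_ne_zero_of_norm_lt_one {w : ℂ} (hw : ‖w‖ < 1) : 1 - w ≠ 0 := fun h => by
  simpa [h] using re_one_sub_pos hw

lemma div_mem_slitPlane_of_re_pos {u v : ℂ} (hu : 0 < u.re) (hv : 0 < v.re) :
    u / v ∈ slitPlane := by
  rw [mem_slitPlane_iff]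
  by_contra! h
  have hv0 : v ≠ 0 := fun h0 => by simp [h0] at hv
  have hreal : u / v = ((u / v).re : ℂ) := ext rfl (by simp [h.2])
  have hre : u.re = (u / v).re * v.re := by
    conv_lhs => rw [← div_mul_cancel₀ u hv0, hreal]
    simp
  nlinarith [h.1, hre]

lemma normSq_one_add_mul_ofReal_sub (z : ℂ) (a : ℝ) :
    normSq (1 + z * a) - normSq (z + a) = (1 - a ^ 2) * (1 - normSq z) := by
  simp only [normSq_apply, add_re, add_im, mul_re, mul_im, ofReal_re, ofReal_im, one_re, one_im]
  ring

end Complex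

open ComplexConjugate

noncomputable def mobius (a : ℝ) (z : ℂ) : ℂ := (z + a) / (1 + z * a)

section Mobius

variable {a : ℝ}

lemma ofReal_one_sub_sq_ne_zero (ha : |a| < 1) : (1 - (a : ℂ) ^ 2) ≠ 0 := by
  norm_cast; nlinarith [abs_nonneg a, sq_abs a]

lemma one_add_mul_ofReal_ne_zero (ha : |a| < 1) {z : ℂ} (hz : ‖z‖ ≤ 1) :
    1 + z * a ≠ 0 := by
  have : ‖-(z * a)‖ < 1 := by
    rw [norm_neg, norm_mul, norm_real, Real.norm_eq_abs]
    nlinarith [norm_nonneg z, abs_nonneg a]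
  simpa using one_sub_ne_zero_of_norm_lt_one this

lemma norm_mobius_lt_one (ha : |a| < 1) {z : ℂ} (hz : ‖z‖ < 1) : ‖mobius a z‖ < 1 := by
  have hd := one_add_mul_ofReal_ne_zero ha hz.le
  have key := normSq_one_add_mul_ofReal_sub z a
  have ha2 : 0 < 1 - a ^ 2 := by nlinarith [abs_nonneg a, sq_abs a]
  have hz2 : normSq z < 1 := by rw [normSq_eq_norm_sq]; nlinarith [norm_nonneg z]
  rw [mobius, norm_div, div_lt_one (norm_pos_iff.mpr hd),
    ← sq_lt_sq₀ (norm_nonneg _) (norm_nonneg _), ← normSq_eq_norm_sq, ← normSq_eq_norm_sq]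
  nlinarith

lemma norm_mobius_eq_one (ha : |a| < 1) {ξ : ℂ} (hξ : ‖ξ‖ = 1) : ‖mobius a ξ‖ = 1 := by
  have hd := one_add_mul_ofReal_ne_zero ha hξ.le
  have key := normSq_one_add_mul_ofReal_sub ξ a
  rw [normSq_eq_norm_sq ξ, hξ] at key
  rw [mobius, norm_div, div_eq_one_iff_eq (norm_ne_zero_iff.mpr hd),
    ← sq_eq_sq₀ (norm_nonneg _) (norm_nonneg _), ← normSq_eq_norm_sq, ← normSq_eq_norm_sq]
  linarith

lemma mobius_mobius_neg (ha : |a| < 1) {ξ : ℂ} (hξ : ‖ξ‖ ≤ 1) :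
    mobius a (mobius (-a) ξ) = ξ := by
  have hd : 1 - ξ * a ≠ 0 := by
    simpa [sub_eq_add_neg] using one_add_mul_ofReal_ne_zero (a := -a) (by rwa [abs_neg]) hξ
  have hnum : mobius (-a) ξ + a = ξ * (1 - a ^ 2) / (1 - ξ * a) := by
    rw [mobius, ofReal_neg, ← sub_eq_add_neg, mul_neg, ← sub_eq_add_neg]; field_simp; ring
  have hden : 1 + mobius (-a) ξ * a = (1 - a ^ 2) / (1 - ξ * a) := by
    rw [mobius, ofReal_neg, ← sub_eq_add_neg, mul_neg, ← sub_eq_add_neg]; field_simp; ring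
  rw [mobius, hnum, hden, div_div_div_cancel_right₀ hd, mul_div_assoc,
    div_self (ofReal_one_sub_sq_ne_zero ha), mul_one]

lemma hasDerivAt_mobius {z : ℂ} (hz : 1 + z * a ≠ 0) :
    HasDerivAt (mobius a) ((1 - (a : ℂ) ^ 2) / (1 + z * a) ^ 2) z :=
  (((hasDerivAt_id' z).add_const (a : ℂ)).div
    (((hasDerivAt_id' z).mul_const (a : ℂ)).const_add 1) hz).congr_deriv (by ring)

lemma mobius_sub_mobius {η z : ℂ} (hη : 1 + η * a ≠ 0) (hz : 1 + z * a ≠ 0) :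
    mobius a η - mobius a z = (1 - a ^ 2) * (η - z) / ((1 + η * a) * (1 + z * a)) := by
  rw [mobius, mobius, div_sub_div _ _ hη hz]
  ring

lemma one_sub_mobius_mul_mobius {η z : ℂ} (hη : 1 + η * a ≠ 0) (hz : 1 + z * a ≠ 0) :
    1 - mobius a η * mobius a z = (1 - a ^ 2) * (1 - η * z) / ((1 + η * a) * (1 + z * a)) := by
  rw [mobius, mobius, div_mul_div_comm, one_sub_div (mul_ne_zero hη hz)]
  ring

lemma Kker_mobius (ha : |a| < 1) {η z : ℂ} (hη : ‖η‖ = 1) (hz : ‖z‖ < 1) :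
    Kker (mobius a η) (mobius a z) * ((1 - (a : ℂ) ^ 2) / (1 + z * a) ^ 2) = Kker η z := by
  have hηa := one_add_mul_ofReal_ne_zero ha hη.le
  have hza := one_add_mul_ofReal_ne_zero ha hz.le
  have ha2 := ofReal_one_sub_sq_ne_zero ha
  have h1 : η - z ≠ 0 := sub_ne_zero.mpr fun h => by rw [h] at hη; linarith
  have h2 : 1 - η * z ≠ 0 := one_sub_ne_zero_of_norm_lt_one (by rwa [norm_mul, hη, one_mul])
  have hηa' : 1 + (a : ℂ) * η ≠ 0 := by rwa [mul_comm]
  have hza' : 1 + (a : ℂ) * z ≠ 0 := by rwa [mul_comm]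
  rw [Kker, Kker, mobius_sub_mobius hηa hza, one_sub_mobius_mul_mobius hηa hza, mobius]
  field_simp
  ring

end Mobius

lemma hasDerivAt_Jker {ξ z : ℂ} (hξ : ‖ξ‖ = 1) (hz : ‖z‖ < 1) :
    HasDerivAt (Jker ξ) (Kker ξ z) z := by
  have hu : 0 < (1 - ξ * z).re := re_one_sub_pos (by rwa [norm_mul, hξ, one_mul])
  have hv : 0 < (1 - conj ξ * z).re :=
    re_one_sub_pos (by rwa [norm_mul, norm_conj, hξ, one_mul])
  have hv0 : 1 - conj ξ * z ≠ 0 := fun h => by simp [h] at hv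
  have hu0 : 1 - ξ * z ≠ 0 := fun h => by simp [h] at hu
  have hξz : ξ - z ≠ 0 := sub_ne_zero.mpr fun h => by rw [h] at hξ; linarith
  have hconj : conj ξ * ξ = 1 := by rw [conj_mul', hξ]; norm_num
  refine ((((hasDerivAt_id' z).const_mul ξ).const_sub 1).div
    (((hasDerivAt_id' z).const_mul (conj ξ)).const_sub 1) hv0).clog
    (div_mem_slitPlane_of_re_pos hu hv) |>.congr_deriv ?_
  rw [Kker, Pi.div_apply]
  field_simp
  linear_combination (1 - ξ * z) * hconj

lemma Jker_mobius {a : ℝ} (ha : |a| < 1) {η z : ℂ} (hη : ‖η‖ = 1) (hz : ‖z‖ < 1) :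
    Jker (mobius a η) (mobius a z) = Jker η z + Jker (mobius a η) a := by
  have hφη := norm_mobius_eq_one ha hη
  have hf : ∀ w ∈ ball (0 : ℂ) 1,
      HasDerivAt (fun w => Jker (mobius a η) (mobius a w)) (Kker η w) w := fun w hw => by
    have hw : ‖w‖ < 1 := mem_ball_zero_iff.mp hw
    exact ((hasDerivAt_Jker hφη (norm_mobius_lt_one ha hw)).comp w
      (hasDerivAt_mobius (one_add_mul_ofReal_ne_zero ha hw.le))).congr_deriv (Kker_mobius ha hη hw)
  have hg : ∀ w ∈ ball (0 : ℂ) 1,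
      HasDerivAt (fun w => Jker η w + Jker (mobius a η) a) (Kker η w) w := fun w hw =>
    (hasDerivAt_Jker hη (mem_ball_zero_iff.mp hw)).add_const _
  refine isOpen_ball.eqOn_of_deriv_eq (convex_ball _ _).isPreconnected
    (fun w hw => (hf w hw).differentiableAt.differentiableWithinAt)
    (fun w hw => (hg w hw).differentiableAt.differentiableWithinAt)
    (fun w hw => (hf w hw).deriv.trans (hg w hw).deriv.symm) (mem_ball_self one_pos) ?_
    (mem_ball_zero_iff.mpr hz)
  simp [mobius, Jker]

lemma measurable_Kker (z : ℂ) : Measurable (Kker · z) := by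
  unfold Kker; fun_prop

lemma measurable_Jker (z : ℂ) : Measurable (Jker · z) := by
  unfold Jker; fun_prop

lemma measurable_mobius (a : ℝ) : Measurable (mobius a) := by
  unfold mobius; fun_prop

lemma continuousOn_Jker {z : ℂ} (hz : ‖z‖ < 1) : ContinuousOn (Jker · z) (sphere 0 1) := by
  intro ξ hξ
  rw [mem_sphere_zero_iff_norm] at hξ
  have hu : 0 < (1 - ξ * z).re := re_one_sub_pos (by rwa [norm_mul, hξ, one_mul])
  have hv : 0 < (1 - conj ξ * z).re :=
    re_one_sub_pos (by rwa [norm_mul, norm_conj, hξ, one_mul])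
  have hv0 : 1 - conj ξ * z ≠ 0 := fun h => by simp [h] at hv
  have hq : ContinuousAt (fun ξ => (1 - ξ * z) / (1 - conj ξ * z)) ξ := by
    fun_prop (disch := exact hv0)
  exact ((continuousAt_clog (div_mem_slitPlane_of_re_pos hu hv)).comp
    (f := fun ξ => (1 - ξ * z) / (1 - conj ξ * z)) hq).continuousWithinAt

lemma integrable_Jker_comp_mul {P : Measure ℂ} {w ψ : ℂ → ℂ} (hw : Integrable w P)
    (hψ : Measurable ψ) (hψP : ∀ᵐ ξ ∂P, ‖ψ ξ‖ = 1) {z : ℂ} (hz : ‖z‖ < 1) :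
    Integrable (fun ξ => Jker (ψ ξ) z * w ξ) P := by
  obtain ⟨C, hC⟩ :=
    (isCompact_sphere (0 : ℂ) 1).exists_bound_of_continuousOn (continuousOn_Jker hz)
  exact hw.bdd_mul ((measurable_Jker z).comp hψ).aestronglyMeasurable
    (hψP.mono fun ξ h => hC _ (mem_sphere_zero_iff_norm.mpr h))

lemma exists_integral_comp_mobius_neg (k : ℂ → ℂ → ℂ) (hk : ∀ z, Measurable (k · z))
    {a : ℝ} (ha : |a| < 1) {P : Measure ℂ} [IsFiniteMeasure P] (hP : ∀ᵐ ξ ∂P, ‖ξ‖ = 1)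
    {w : ℂ → ℂ} (hw : Integrable w P) :
    ∃ (Q : Measure ℂ) (v : ℂ → ℂ), IsFiniteMeasure Q ∧ (∀ᵐ η ∂Q, ‖η‖ = 1) ∧ Integrable v Q ∧
      ∀ z, ∫ ξ, k (mobius (-a) ξ) z * w ξ ∂P = ∫ η, k η z * v η ∂Q := by
  have hψ := measurable_mobius (-a)
  -- `w` is only a.e. strongly measurable for `P`, which says nothing about `w ∘ φ_a` under the
  -- pushforward measure: compose a strongly measurable representative instead.
  set w₀ := hw.aestronglyMeasurable.mk w
  have hv : StronglyMeasurable (w₀ ∘ mobius a) :=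
    hw.aestronglyMeasurable.stronglyMeasurable_mk.comp_measurable (measurable_mobius a)
  have hwv : ∀ᵐ ξ ∂P, w ξ = (w₀ ∘ mobius a) (mobius (-a) ξ) := by
    filter_upwards [hP, hw.aestronglyMeasurable.ae_eq_mk] with ξ hξ hξw
    rw [Function.comp_apply, mobius_mobius_neg ha hξ.le, hξw]
  refine ⟨P.map (mobius (-a)), w₀ ∘ mobius a, inferInstance, ?_, ?_, fun z => ?_⟩
  · rw [ae_map_iff hψ.aemeasurable (measurableSet_eq_fun measurable_norm measurable_const)]
    exact hP.mono fun ξ hξ => norm_mobius_eq_one (by rwa [abs_neg]) hξ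
  · rw [integrable_map_measure hv.aestronglyMeasurable hψ.aemeasurable]
    exact hw.congr hwv
  · rw [integral_map (f := fun η => k η z * (w₀ ∘ mobius a) η) hψ.aemeasurable
      ((hk z).stronglyMeasurable.mul hv).aestronglyMeasurable]
    exact integral_congr_ae (hwv.mono fun ξ h => congrArg _ h)

lemma memK_deriv_comp_mobius {a : ℝ} (ha : |a| < 1) {f : ℂ → ℂ} (hf : MemK f) {F : ℂ → ℂ}
    (hF : ∀ z ∈ ball (0 : ℂ) 1, HasDerivAt F (f z) z) : MemK (deriv (F ∘ mobius a)) := by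
  obtain ⟨P, w, hPfin, hP, hw, hfP⟩ := hf
  obtain ⟨Q, v, hQfin, hQ, hv, hPQ⟩ :=
    exists_integral_comp_mobius_neg Kker measurable_Kker ha hP hw
  refine ⟨Q, v, hQfin, hQ, hv, fun z hz => ?_⟩
  have hz : ‖z‖ < 1 := mem_ball_zero_iff.mp hz
  have hφz : mobius a z ∈ ball (0 : ℂ) 1 := mem_ball_zero_iff.mpr (norm_mobius_lt_one ha hz)
  have hderiv := (hF _ hφz).comp z (hasDerivAt_mobius (one_add_mul_ofReal_ne_zero ha hz.le))
  rw [← hPQ, hderiv.deriv, hfP _ hφz, ← integral_mul_const]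
  refine integral_congr_ae (hP.mono fun ξ hξ => ?_)
  have hψξ := norm_mobius_eq_one (a := -a) (by rwa [abs_neg]) hξ
  dsimp only
  rw [← Kker_mobius ha hψξ hz, mobius_mobius_neg ha hξ.le]
  ring

lemma exists_memJ_comp_mobius {a : ℝ} (ha : |a| < 1) {g : ℂ → ℂ} (hg : MemJ g) :
    ∃ (h : ℂ → ℂ) (c : ℂ), MemJ h ∧ ∀ z ∈ ball (0 : ℂ) 1, g (mobius a z) = h z + c := by
  obtain ⟨P, w, hPfin, hP, hw, hgP⟩ := hg
  obtain ⟨Q, v, hQfin, hQ, hv, hPQ⟩ :=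
    exists_integral_comp_mobius_neg Jker measurable_Jker ha hP hw
  have ha' : |-a| < 1 := by rwa [abs_neg]
  refine ⟨fun z => ∫ η, Jker η z * v η ∂Q, ∫ ξ, Jker ξ a * w ξ ∂P,
    ⟨Q, v, hQfin, hQ, hv, fun _ _ => rfl⟩, fun z hz => ?_⟩
  have hz : ‖z‖ < 1 := mem_ball_zero_iff.mp hz
  have hint₁ : Integrable (fun ξ => Jker (mobius (-a) ξ) z * w ξ) P :=
    integrable_Jker_comp_mul hw (measurable_mobius _) (hP.mono fun _ => norm_mobius_eq_one ha') hz
  have hint₂ : Integrable (fun ξ => Jker ξ a * w ξ) P :=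
    integrable_Jker_comp_mul hw measurable_id hP (by rwa [norm_real, Real.norm_eq_abs])
  rw [hgP _ (mem_ball_zero_iff.mpr (norm_mobius_lt_one ha hz))]
  dsimp only
  rw [← hPQ, ← integral_add hint₁ hint₂]
  refine integral_congr_ae (hP.mono fun ξ hξ => ?_)
  have hJ := Jker_mobius ha (norm_mobius_eq_one ha' hξ) hz
  rw [mobius_mobius_neg ha hξ.le] at hJ
  dsimp only
  rw [hJ]
  ring

theorem stmt15 (a : ℝ) (ha : -1 < a) (ha' : a < 1)
    (f : ℂ → ℂ) (hf : MemK f)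
    (F : ℂ → ℂ) (hF : ∀ z ∈ ball (0 : ℂ) 1, HasDerivAt F (f z) z) :
    MemK (deriv (fun z => F ((z + a) / (1 + z * a)))) ∧
    ∀ g : ℂ → ℂ, MemJ g → ∃ (h : ℂ → ℂ) (c : ℂ), MemJ h ∧
      ∀ z ∈ ball (0 : ℂ) 1, g ((z + a) / (1 + z * a)) = h z + c := by
  have ha₁ : |a| < 1 := abs_lt.mpr ⟨ha, ha'⟩
  exact ⟨memK_deriv_comp_mobius ha₁ hf hF, fun g hg => exists_memJ_comp_mobius ha₁ hg⟩
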